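/- arXiv:math/0303114 — 3 statements merged into one kernel-verified Lean document; each statement's English description precedes it below -/
import Mathlib

section
/- Quantitative implicit function theorem: Let B1, B2 be Banach spaces and F : B1 × ℝ → B2 have continuous Fréchet derivative, with D_h F(0,0) invertible and ‖(D_h F(0,0))⁻¹‖ ≤ C. Suppose there exist r0 > r > 0 and t0 > 0 such that for all (h, t) in the closed ball U(r0) × [0, t0] one has ‖D_h F(h,t) − D_h F(0,0)‖ ≤ 1/(2C) and ‖F(0,t)‖ ≤ r/(2C). Then there exists a C¹ path h(t) in U(r) for t ∈ [0, t0] with F(h(t), t) = 0, and for each t this h(t) is the unique solution of F(h, t) = 0 in U(r0). -/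
/-!
For each fixed `t`, the map `x ↦ F (x, t)` stays within `1 / (2C)` of the isomorphism `e` in
derivative on `U(r₀)`, so by the mean value inequality it is `e` up to a `1 / (2C)`-Lipschitz
error there. The Newton-type contraction `x ↦ x - e⁻¹ F (x, t)` then maps `U(r)` into itself
(this is where `‖F (0, t)‖ ≤ r / (2C)` enters) and is injective up to `U(r₀)`, giving a unique zero
`h t`. The same estimate makes `D_h F (h t, t)` invertible, so the classical implicit function
theorem gives a `C¹` local solution branch near each `t`, which coincides with `h` by uniqueness.
-/

open Set Metric Filter Topology
open scoped NNReal

theorem Convex.approximatesLinearOn_of_norm_fderiv_sub_le {E F : Type*} [NormedAddCommGroup E]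
    [NormedSpace ℝ E] [NormedAddCommGroup F] [NormedSpace ℝ F] {f : E → F} {φ : E →L[ℝ] F}
    {s : Set E} {c : ℝ≥0} (hs : Convex ℝ s) (hf : ∀ x ∈ s, DifferentiableAt ℝ f x)
    (bound : ∀ x ∈ s, ‖fderiv ℝ f x - φ‖ ≤ c) : ApproximatesLinearOn f φ s c :=
  fun _ hx _ hy => by
    simpa only [map_sub] using hs.norm_image_sub_le_of_norm_fderiv_le' hf bound hy hx

section Perturbation

variable {𝕜 : Type*} [NontriviallyNormedField 𝕜]
  {E : Type*} [NormedAddCommGroup E] [NormedSpace 𝕜 E]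
  {F : Type*} [NormedAddCommGroup F] [NormedSpace 𝕜 F]

theorem ContinuousLinearMap.isInvertible_of_norm_symm_mul_norm_sub_lt [CompleteSpace E]
    {e : E ≃L[𝕜] F} {A : E →L[𝕜] F}
    (h : ‖(e.symm : F →L[𝕜] E)‖ * ‖A - e‖ < 1) : A.IsInvertible := by
  have hsmall : ‖(e.symm : F →L[𝕜] E) ∘L ((e : E →L[𝕜] F) - A)‖ < 1 :=
    (opNorm_comp_le _ _).trans_lt (by rwa [norm_sub_rev])
  have hunit : (e.symm : F →L[𝕜] E) ∘L A =
      1 - (e.symm : F →L[𝕜] E) ∘L ((e : E →L[𝕜] F) - A) := by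
    ext; simp
  rw [← isInvertible_equiv_comp (e := e.symm), hunit]
  exact ⟨ContinuousLinearEquiv.unitsEquiv 𝕜 E (Units.oneSub _ hsmall), rfl⟩

namespace ApproximatesLinearOn

variable {f : E → F} {e : E ≃L[𝕜] F} {s : Set E} {c K : ℝ≥0}

theorem injOn_of_mul_lt_one (hf : ApproximatesLinearOn f (e : E →L[𝕜] F) s c)
    (he : ‖(e.symm : F →L[𝕜] E)‖₊ ≤ K) (hcK : c * K < 1) : InjOn f s := by
  refine hf.injOn (e.subsingleton_or_nnnorm_symm_pos.imp id fun hpos => ?_)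
  rw [NNReal.lt_inv_iff_mul_lt hpos.ne']
  exact (mul_le_mul_right he c).trans_lt hcK

theorem exists_mem_closedBall_zero_unique [CompleteSpace E] {r R : ℝ}
    (hf : ApproximatesLinearOn f (e : E →L[𝕜] F) (closedBall 0 R) c)
    (he : ‖(e.symm : F →L[𝕜] E)‖₊ ≤ K) (hcK : c * K < 1) (hr : 0 ≤ r) (hrR : r ≤ R)
    (h0 : ‖f 0‖ ≤ ((K : ℝ)⁻¹ - c) * r) :
    ∃ x ∈ closedBall 0 r, f x = 0 ∧ ∀ y ∈ closedBall 0 R, f y = 0 → y = x := by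
  let eK : (e : E →L[𝕜] F).NonlinearRightInverse :=
    { e.toNonlinearRightInverse with
      nnnorm := K
      bound' := fun y => ((e.symm : F →L[𝕜] E).le_opNorm y).trans (by gcongr; exact he) }
  obtain ⟨x, hx, hfx⟩ : ∃ x ∈ closedBall 0 r, f x = 0 :=
    hf.surjOn_closedBall_of_nonlinearRightInverse eK hr (closedBall_subset_closedBall hrR)
      (by simpa [mem_closedBall, dist_eq_norm] using h0)
  exact ⟨x, hx, hfx, fun y hy hfy => hf.injOn_of_mul_lt_one he hcK hy
    (closedBall_subset_closedBall hrR hx) (hfy.trans hfx.symm)⟩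

end ApproximatesLinearOn

end Perturbation

theorem exists_mem_closedBall_zero_unique_of_norm_fderiv_sub_le {E F : Type*}
    [NormedAddCommGroup E] [NormedSpace ℝ E] [CompleteSpace E] [NormedAddCommGroup F]
    [NormedSpace ℝ F] {f : E → F} {e : E ≃L[ℝ] F} {C r R : ℝ}
    (hf : ∀ x ∈ closedBall 0 R, DifferentiableAt ℝ f x) (hC : 0 < C)
    (he : ‖(e.symm : F →L[ℝ] E)‖ ≤ C)
    (hderiv : ∀ x ∈ closedBall 0 R, ‖fderiv ℝ f x - e‖ ≤ 1 / (2 * C))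
    (hr : 0 ≤ r) (hrR : r ≤ R) (h0 : ‖f 0‖ ≤ r / (2 * C)) :
    ∃ x ∈ closedBall 0 r, f x = 0 ∧ ∀ y ∈ closedBall 0 R, f y = 0 → y = x := by
  set K : ℝ≥0 := ⟨C, hC.le⟩
  set c : ℝ≥0 := ⟨1 / (2 * C), by positivity⟩
  have hK : (K : ℝ) = C := rfl
  have hc : (c : ℝ) = 1 / (2 * C) := rfl
  have hcK : c * K < 1 := by
    rw [← NNReal.coe_lt_coe, NNReal.coe_mul, hK, hc]
    field_simp
    norm_num
  refine ApproximatesLinearOn.exists_mem_closedBall_zero_unique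
    ((convex_closedBall 0 R).approximatesLinearOn_of_norm_fderiv_sub_le hf hderiv) he hcK hr hrR ?_
  rwa [hK, hc, show (C⁻¹ - 1 / (2 * C)) * r = r / (2 * C) by field_simp; ring]

section ImplicitFunction

variable {𝕜 : Type*} [RCLike 𝕜]
  {E : Type*} [NormedAddCommGroup E] [NormedSpace 𝕜 E] [CompleteSpace E]
  {F : Type*} [NormedAddCommGroup F] [NormedSpace 𝕜 F] [CompleteSpace F]
  {G : Type*} [NormedAddCommGroup G] [NormedSpace 𝕜 G] [CompleteSpace G]

theorem ContDiffAt.contDiffWithinAt_of_eventually_unique {n : WithTop ℕ∞} {f : E × G → F}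
    {g : G → E} {s : Set G} {t : G} (hf : ContDiffAt 𝕜 n f (g t, t)) (hn : n ≠ 0)
    (hinv : (fderiv 𝕜 (fun x => f (x, t)) (g t)).IsInvertible)
    (huniq : ∀ᶠ p in 𝓝 (g t) ×ˢ 𝓝[s] t, f p = f (g t, t) → p.1 = g p.2) :
    ContDiffWithinAt 𝕜 n g s t := by
  -- The library's implicit function theorem solves for the second variable, hence the swap.
  set f' : G × E → F := fun p => f (p.2, p.1)
  have hf' : ContDiffAt 𝕜 n f' (t, g t) :=
    hf.comp (t, g t) (contDiffAt_snd.prodMk contDiffAt_fst)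
  have hinv' : (fderiv 𝕜 f' (t, g t) ∘L .inr 𝕜 G E).IsInvertible := by
    have hd := (hf.differentiableAt hn).hasFDerivAt
    have hd' : HasFDerivAt f' _ (t, g t) :=
      hd.comp (t, g t) (hasFDerivAt_snd.prodMk hasFDerivAt_fst)
    have hpartial : HasFDerivAt (fun x => f (x, t)) _ (g t) :=
      hd.comp (g t) (hasFDerivAt_prodMk_left (𝕜 := 𝕜) (g t) t)
    rw [hpartial.fderiv] at hinv
    rw [hd'.fderiv]
    convert hinv using 1
    ext; simp
  set ψ := hf'.implicitFunction hn hinv'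
  have hψ : ContDiffAt 𝕜 n ψ t := hf'.contDiffAt_implicitFunction hn hinv'
  have hψt : ψ t = g t := hf'.implicitFunction_apply_self hn hinv'
  have hsol : ∀ᶠ t' in 𝓝[s] t, f (ψ t', t') = f (g t, t) :=
    nhdsWithin_le_nhds (hf'.eventually_apply_implicitFunction hn hinv')
  have htend : Tendsto (fun t' => (ψ t', t')) (𝓝[s] t) (𝓝 (g t) ×ˢ 𝓝[s] t) :=
    ((hψt ▸ hψ.continuousAt.tendsto).mono_left nhdsWithin_le_nhds).prodMk tendsto_id
  have heq : g =ᶠ[𝓝[s] t] ψ :=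
    ((htend.eventually huniq).and hsol).mono fun t' h => (h.1 h.2).symm
  exact hψ.contDiffWithinAt.congr_of_eventuallyEq heq hψt.symm

end ImplicitFunction

theorem quantitative_implicit_function_theorem_general
    {B1 B2 : Type*} [NormedAddCommGroup B1] [NormedSpace ℝ B1] [CompleteSpace B1]
    [NormedAddCommGroup B2] [NormedSpace ℝ B2] [CompleteSpace B2]
    (F : B1 × ℝ → B2) (hF : ContDiff ℝ 1 F)
    (e : B1 ≃L[ℝ] B2)
    (C : ℝ) (hC : 0 < C) (hinv : ‖(e.symm : B2 →L[ℝ] B1)‖ ≤ C)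
    (r r0 t0 : ℝ) (hr : 0 < r) (hrr0 : r < r0)
    (hderiv : ∀ h ∈ closedBall (0 : B1) r0, ∀ t ∈ Icc (0 : ℝ) t0,
      ‖fderiv ℝ (fun h' => F (h', t)) h - (e : B1 →L[ℝ] B2)‖ ≤ 1 / (2 * C))
    (hsmall : ∀ t ∈ Icc (0 : ℝ) t0, ‖F (0, t)‖ ≤ r / (2 * C)) :
    ∃ h : ℝ → B1, ContDiffOn ℝ 1 h (Icc 0 t0) ∧
      (∀ t ∈ Icc (0 : ℝ) t0, h t ∈ closedBall (0 : B1) r ∧ F (h t, t) = 0) ∧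
      (∀ t ∈ Icc (0 : ℝ) t0, ∀ h' ∈ closedBall (0 : B1) r0, F (h', t) = 0 → h' = h t) := by
  have hzero : ∀ t ∈ Icc (0 : ℝ) t0, ∃ x ∈ closedBall (0 : B1) r, F (x, t) = 0 ∧
      ∀ y ∈ closedBall (0 : B1) r0, F (y, t) = 0 → y = x := fun t ht =>
    exists_mem_closedBall_zero_unique_of_norm_fderiv_sub_le
      (fun x _ => (hF.differentiable one_ne_zero).differentiableAt.comp x
        (differentiableAt_id.prodMk (differentiableAt_const t)))
      hC hinv (fun x hx => hderiv x hx t ht) hr.le hrr0.le (hsmall t ht)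
  choose! h hmem hsol huniq using hzero
  refine ⟨h, fun s hs => ?_, fun t ht => ⟨hmem t ht, hsol t ht⟩, huniq⟩
  refine hF.contDiffAt.contDiffWithinAt_of_eventually_unique one_ne_zero ?_ ?_
  · refine ContinuousLinearMap.isInvertible_of_norm_symm_mul_norm_sub_lt (e := e) ?_
    calc ‖(e.symm : B2 →L[ℝ] B1)‖ * ‖fderiv ℝ (fun x => F (x, s)) (h s) - e‖
        ≤ C * (1 / (2 * C)) := by
          gcongr
          exact hderiv _ (closedBall_subset_closedBall hrr0.le (hmem s hs)) s hs
      _ < 1 := by field_simp; norm_num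
  · have hball : ball (0 : B1) r0 ∈ 𝓝 (h s) :=
      isOpen_ball.mem_nhds <| mem_ball_zero_iff.2 <|
        (mem_closedBall_zero_iff.1 (hmem s hs)).trans_lt hrr0
    filter_upwards [prod_mem_prod hball self_mem_nhdsWithin] with p hp hFp
    exact huniq p.2 hp.2 p.1 (ball_subset_closedBall hp.1) (hFp.trans (hsol s hs))

/-- **Quantitative implicit function theorem.** -/
theorem quantitative_implicit_function_theorem
    {B1 B2 : Type*} [NormedAddCommGroup B1] [NormedSpace ℝ B1] [CompleteSpace B1]
    [NormedAddCommGroup B2] [NormedSpace ℝ B2] [CompleteSpace B2]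
    (F : B1 × ℝ → B2) (hF : ContDiff ℝ 1 F)
    (e : B1 ≃L[ℝ] B2)
    (he : (e : B1 →L[ℝ] B2) = fderiv ℝ (fun h => F (h, 0)) 0)
    (C : ℝ) (hC : 0 < C) (hinv : ‖(e.symm : B2 →L[ℝ] B1)‖ ≤ C)
    (r r0 t0 : ℝ) (hr : 0 < r) (hrr0 : r < r0) (ht0 : 0 < t0)
    (hderiv : ∀ h ∈ closedBall (0 : B1) r0, ∀ t ∈ Icc (0 : ℝ) t0,
      ‖fderiv ℝ (fun h' => F (h', t)) h - (e : B1 →L[ℝ] B2)‖ ≤ 1 / (2 * C))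
    (hsmall : ∀ t ∈ Icc (0 : ℝ) t0, ‖F (0, t)‖ ≤ r / (2 * C)) :
    ∃ h : ℝ → B1, ContDiffOn ℝ 1 h (Icc 0 t0) ∧
      (∀ t ∈ Icc (0 : ℝ) t0, h t ∈ closedBall (0 : B1) r ∧ F (h t, t) = 0) ∧
      (∀ t ∈ Icc (0 : ℝ) t0, ∀ h' ∈ closedBall (0 : B1) r0, F (h', t) = 0 → h' = h t) :=
  quantitative_implicit_function_theorem_general F hF e C hC hinv r r0 t0 hr hrr0 hderiv hsmall
end

section
/- In the toric setting, the linearization at (h,t) = (0,0) of the phase-angle functional F(h,t) = Im(log Ω_t|_{L_h}), where L_h is the graph of dh over the torus fibre L₀, is the operator δh ↦ −(1/2) Σ_{j,k} ρ^{jk} ∂²(δh)/∂θ_j∂θ_k, where (ρ^{jk}) is the inverse of the Hessian matrix (ρ_{jk}) of the toric Kähler potential. In particular, this operator is elliptic and its kernel on the torus consists exactly of the constant functions. -/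
/-!
The linearization is a first-order expansion: `det (1 + s M) = 1 + s tr M + O(s²)`, so the
derivative of `Im log det (1 + s U₀ A)` at `0` is `Im tr (U₀ A) = -(1/2) Σ ρ^{jk} A_{jk}`.

For the kernel, let `L u = Σ ρ^{jk} ∂_j ∂_k u` with `(ρ^{jk})` positive definite. The flux
`u · ρ ∇u` has divergence `⟨∇u, ρ ∇u⟩ + u · L u`. Over a box whose sides are periods the
divergence theorem kills the integral of the divergence, so if `L u = 0` the continuous
nonnegative function `⟨∇u, ρ ∇u⟩` integrates to zero over every such box, hence vanishes; so
`∇u = 0` and `u` is constant.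
-/

open Complex MeasureTheory Set Function Matrix

namespace Matrix

theorem hasDerivAt_det_one_add_smul {ι 𝕜 : Type*} [Fintype ι] [DecidableEq ι]
    [NontriviallyNormedField 𝕜] (M : Matrix ι ι 𝕜) :
    HasDerivAt (fun z : 𝕜 => (1 + z • M).det) M.trace 0 := by
  rw [funext fun z : 𝕜 => det_one_add_smul z M]
  generalize (1 + (Polynomial.X : Polynomial 𝕜) • M.map Polynomial.C).det.divX.divX = P
  have hP : HasDerivAt (fun z => P.eval z * z ^ 2) 0 0 := by
    simpa using (P.hasDerivAt 0).fun_mul (hasDerivAt_pow 2 (0 : 𝕜))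
  simpa using (((hasDerivAt_id (0 : 𝕜)).const_mul M.trace).const_add 1).fun_add hP

theorem hasDerivAt_im_log_det_one_add_smul {ι : Type*} [Fintype ι] [DecidableEq ι]
    (M : Matrix ι ι ℂ) :
    HasDerivAt (fun s : ℝ => (log (1 + (s : ℂ) • M).det).im) M.trace.im 0 := by
  have hlog : HasDerivAt (fun z : ℂ => log (1 + z • M).det) M.trace 0 := by
    simpa using (hasDerivAt_det_one_add_smul M).clog (by simp)
  exact imCLM.hasFDerivAt.comp_hasDerivAt 0 (hlog.comp_ofReal (z := 0))

theorem im_trace_smul_map_ofReal_mul {ι : Type*} [Fintype ι] {B A : Matrix ι ι ℝ}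
    (hA : A.IsSymm) (c : ℂ) :
    (c • B.map ofReal * A.map ofReal).trace.im = c.im * ∑ j, ∑ k, B j k * A j k := by
  rw [Matrix.smul_mul, trace_smul]
  simp only [trace, diag, mul_apply, map_apply, smul_eq_mul,
    ← ofReal_mul, ← ofReal_sum, mul_im, ofReal_re, ofReal_im, mul_zero, zero_add, hA.apply]

theorem PosDef.eq_zero_of_dotProduct_mulVec_self_eq_zero {ι : Type*} [Fintype ι]
    {A : Matrix ι ι ℝ} (hA : A.PosDef) {v : ι → ℝ} (h : v ⬝ᵥ (A *ᵥ v) = 0) : v = 0 := by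
  by_contra hv
  simpa [h] using hA.dotProduct_mulVec_pos hv

end Matrix

theorem Function.Periodic.fderiv {𝕜 E F : Type*} [NontriviallyNormedField 𝕜]
    [NormedAddCommGroup E] [NormedSpace 𝕜 E] [NormedAddCommGroup F] [NormedSpace 𝕜 F]
    {f : E → F} {c : E} (h : Periodic f c) : Periodic (fderiv 𝕜 f) c := fun x => by
  rw [← fderiv_comp_add_right, h.funext]

theorem fderiv_fderiv_apply_eq_iteratedFDeriv {𝕜 E F : Type*} [NontriviallyNormedField 𝕜]
    [NormedAddCommGroup E] [NormedSpace 𝕜 E] [NormedAddCommGroup F] [NormedSpace 𝕜 F]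
    {f : E → F} {x : E} (hf : DifferentiableAt 𝕜 (fderiv 𝕜 f) x) (v w : E) :
    fderiv 𝕜 (fun y => fderiv 𝕜 f y v) x w = iteratedFDeriv 𝕜 2 f x ![w, v] := by
  rw [fderiv_clm_apply hf (differentiableAt_const v), iteratedFDeriv_two_apply]
  simp

theorem integral_sum_fderiv_single_eq_zero_of_periodic {n : ℕ} {E : Type*}
    [NormedAddCommGroup E] [NormedSpace ℝ E] [CompleteSpace E]
    {a b : Fin (n + 1) → ℝ} (hle : a ≤ b) {f : Fin (n + 1) → (Fin (n + 1) → ℝ) → E}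
    (hf : ∀ i, ContDiff ℝ 1 (f i)) (hper : ∀ i, Periodic (f i) (Pi.single i (b i - a i))) :
    ∫ x in Icc a b, ∑ i, fderiv ℝ (f i) x (Pi.single i 1) = 0 := by
  have hcont : Continuous fun x => ∑ i, fderiv ℝ (f i) x (Pi.single i 1) :=
    continuous_finsetSum _ fun i _ =>
      ((hf i).continuous_fderiv one_ne_zero).clm_apply continuous_const
  rw [integral_divergence_of_hasFDerivAt_off_countable' a b hle f (fun i x => fderiv ℝ (f i) x)
    ∅ countable_empty (fun i => (hf i).continuous.continuousOn)
    (fun x _ i => ((hf i).differentiable one_ne_zero x).hasFDerivAt)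
    (hcont.continuousOn.integrableOn_compact isCompact_Icc)]
  refine Finset.sum_eq_zero fun i _ => sub_eq_zero.2 <|
    setIntegral_congr_fun measurableSet_Icc fun y _ => ?_
  rw [eq_add_of_sub_eq' (Fin.insertNth_sub_same (α := fun _ => ℝ) i (b i) (a i) y), hper i]

theorem Continuous.eqOn_zero_of_setIntegral_eq_zero {X : Type*} [TopologicalSpace X]
    [MeasurableSpace X] [OpensMeasurableSpace X] {μ : Measure X} [μ.IsOpenPosMeasure]
    {f : X → ℝ} {s U : Set X} (hf : Continuous f) (h0 : 0 ≤ f) (hfi : IntegrableOn f s μ)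
    (hint : ∫ x in s, f x ∂μ = 0) (hU : IsOpen U) (hUs : U ⊆ s) : EqOn f 0 U := by
  have hs : f =ᵐ[μ.restrict s] 0 :=
    (setIntegral_eq_zero_iff_of_nonneg_ae (Filter.Eventually.of_forall h0) hfi).1 hint
  exact Measure.eqOn_open_of_ae_eq (ae_restrict_of_ae_restrict_of_subset hUs hs) hU
    hf.continuousOn continuousOn_const

section CoordGradient

variable {ι : Type*} [Fintype ι] [DecidableEq ι]

noncomputable def coordGradient (u : (ι → ℝ) → ℝ) (x : ι → ℝ) : ι → ℝ :=
  fun k => fderiv ℝ u x (Pi.single k 1)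

noncomputable def hessianContract (A : Matrix ι ι ℝ) (u : (ι → ℝ) → ℝ) (x : ι → ℝ) : ℝ :=
  ∑ j, ∑ k, A j k * iteratedFDeriv ℝ 2 u x ![Pi.single j 1, Pi.single k 1]

theorem contDiff_coordGradient_apply {u : (ι → ℝ) → ℝ} (hu : ContDiff ℝ 2 u) (k : ι) :
    ContDiff ℝ 1 (fun x => coordGradient u x k) :=
  (hu.fderiv_right (m := 1) le_rfl).clm_apply contDiff_const

theorem Function.Periodic.coordGradient {u : (ι → ℝ) → ℝ} {c : ι → ℝ} (h : Periodic u c) :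
    Periodic (coordGradient u) c := fun x => by
  unfold _root_.coordGradient
  rw [h.fderiv x]

theorem fderiv_eq_zero_of_coordGradient_eq_zero {u : (ι → ℝ) → ℝ} {x : ι → ℝ}
    (h : coordGradient u x = 0) : fderiv ℝ u x = 0 :=
  ContinuousLinearMap.coe_injective <| (Pi.basisFun ℝ ι).ext fun k => by
    simpa [coordGradient] using congrFun h k

theorem sum_fderiv_mul_mulVec_coordGradient (A : Matrix ι ι ℝ) {u : (ι → ℝ) → ℝ}
    (hu : ContDiff ℝ 2 u) (x : ι → ℝ) :
    ∑ j, fderiv ℝ (fun y => u y * (A *ᵥ coordGradient u y) j) x (Pi.single j 1) =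
      coordGradient u x ⬝ᵥ (A *ᵥ coordGradient u x) + u x * hessianContract A u x := by
  have hDu : Differentiable ℝ (fderiv ℝ u) :=
    (hu.fderiv_right (m := 1) le_rfl).differentiable one_ne_zero
  have hg : ∀ k, Differentiable ℝ (fun y => coordGradient u y k) := fun k =>
    (contDiff_coordGradient_apply hu k).differentiable one_ne_zero
  have hAg : ∀ j, fderiv ℝ (fun y => (A *ᵥ coordGradient u y) j) x (Pi.single j 1) =
      ∑ k, A j k * iteratedFDeriv ℝ 2 u x ![Pi.single j 1, Pi.single k 1] := by
    intro j
    simp only [mulVec, dotProduct]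
    rw [fderiv_fun_sum fun k _ => (hg k x).const_mul (A j k)]
    simp only [FunLike.coe_sum, Finset.sum_apply]
    refine Finset.sum_congr rfl fun k _ => ?_
    rw [fderiv_const_mul (hg k x), _root_.smul_apply, smul_eq_mul]
    exact congrArg _ (fderiv_fderiv_apply_eq_iteratedFDeriv (hDu x) _ _)
  have hG : ∀ j, DifferentiableAt ℝ (fun y => (A *ᵥ coordGradient u y) j) x := fun j => by
    simp only [mulVec, dotProduct]
    fun_prop
  simp only [fderiv_fun_mul ((hu.differentiable (by norm_num)) x) (hG _), _root_.add_apply,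
    _root_.smul_apply, smul_eq_mul, hAg, Finset.sum_add_distrib, hessianContract,
    Finset.mul_sum, dotProduct]
  rw [add_comm]
  congr 1
  exact Finset.sum_congr rfl fun j _ => mul_comm _ _

end CoordGradient

section Torus

variable {n : ℕ} {A : Matrix (Fin (n + 1)) (Fin (n + 1)) ℝ} {u : (Fin (n + 1) → ℝ) → ℝ} {T : ℝ}

theorem integral_dotProduct_mulVec_coordGradient_eq_zero (hu : ContDiff ℝ 2 u) (hT : 0 ≤ T)
    (hper : ∀ j, Periodic u (Pi.single j T)) (hL : ∀ x, hessianContract A u x = 0)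
    (a : Fin (n + 1) → ℝ) :
    ∫ x in Icc a (a + fun _ => T), coordGradient u x ⬝ᵥ (A *ᵥ coordGradient u x) = 0 := by
  have hdiv : ∀ x, coordGradient u x ⬝ᵥ (A *ᵥ coordGradient u x) =
      ∑ j, fderiv ℝ (fun y => u y * (A *ᵥ coordGradient u y) j) x (Pi.single j 1) := fun x => by
    rw [sum_fderiv_mul_mulVec_coordGradient A hu, hL, mul_zero, add_zero]
  simp_rw [hdiv]
  refine integral_sum_fderiv_single_eq_zero_of_periodic (E := ℝ)
    (fun _ => le_add_of_nonneg_right hT) (fun j => ?_) fun j y => ?_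
  · have hu1 : ContDiff ℝ 1 u := hu.of_le (by norm_num)
    have hg := contDiff_coordGradient_apply hu
    simp only [mulVec, dotProduct]
    fun_prop
  · simp only [add_sub_cancel_left, hper j y, (hper j).coordGradient y]

theorem coordGradient_eq_zero_of_hessianContract_eq_zero (hA : A.PosDef)
    (hu : ContDiff ℝ 2 u) (hT : 0 < T) (hper : ∀ j, Periodic u (Pi.single j T))
    (hL : ∀ x, hessianContract A u x = 0) (x : Fin (n + 1) → ℝ) : coordGradient u x = 0 := by
  set Q : (Fin (n + 1) → ℝ) → ℝ := fun y => coordGradient u y ⬝ᵥ (A *ᵥ coordGradient u y)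
  have hQ_cont : Continuous Q := by
    have hg := fun k => (contDiff_coordGradient_apply hu k).continuous
    simp only [Q, dotProduct, mulVec]
    fun_prop
  set a : Fin (n + 1) → ℝ := x - fun _ => T / 2
  have hx : x ∈ univ.pi fun i => Ioo (a i) ((a + fun _ => T : Fin (n + 1) → ℝ) i) :=
    fun i _ => by
      simp only [a, Pi.sub_apply, Pi.add_apply, mem_Ioo]
      constructor <;> linarith
  refine hA.eq_zero_of_dotProduct_mulVec_self_eq_zero <|
    hQ_cont.eqOn_zero_of_setIntegral_eq_zero (fun y => hA.posSemidef.dotProduct_mulVec_nonneg _)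
      (hQ_cont.continuousOn.integrableOn_compact isCompact_Icc)
      (integral_dotProduct_mulVec_coordGradient_eq_zero hu hT.le hper hL a)
      (isOpen_set_pi finite_univ fun _ _ => isOpen_Ioo)
      ((pi_univ_Ioo_subset _ _).trans Ioo_subset_Icc_self) hx

end Torus

theorem exists_eq_const_of_hessianContract_eq_zero {n : ℕ} {A : Matrix (Fin n) (Fin n) ℝ}
    (hA : A.PosDef) {u : (Fin n → ℝ) → ℝ} (hu : ContDiff ℝ 2 u) {T : ℝ} (hT : 0 < T)
    (hper : ∀ j, Periodic u (Pi.single j T)) (hL : ∀ x, hessianContract A u x = 0) :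
    ∃ c, ∀ x, u x = c := by
  cases n with
  | zero => exact ⟨u 0, fun x => congrArg u (Subsingleton.elim _ _)⟩
  | succ n =>
    refine ⟨u 0, fun x => is_const_of_fderiv_eq_zero (hu.differentiable (by norm_num))
      (fun y => fderiv_eq_zero_of_coordGradient_eq_zero ?_) x 0⟩
    exact coordGradient_eq_zero_of_hessianContract_eq_zero hA hu hT hper hL y

theorem toric_linearization_and_kernel_general
    (n : ℕ) (H Hinv : Matrix (Fin n) (Fin n) ℝ)
    (hpos : H.PosDef)
    (hHinv : H * Hinv = 1 ∧ Hinv * H = 1) :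
    -- the linearization is δh ↦ −(1/2) Σ ρ^{jk} ∂²δh/∂θ_j∂θ_k
    (∀ A : Matrix (Fin n) (Fin n) ℝ, A.IsSymm →
      HasDerivAt (fun s : ℝ =>
          (Complex.log (Matrix.det ((1 : Matrix (Fin n) (Fin n) ℂ) +
            (s : ℂ) • ((((-Complex.I) / 2) • (Hinv.map (fun a => (a : ℂ)))) *
              (A.map (fun a => (a : ℂ))))))).im)
        (-(1 / 2) * ∑ j, ∑ k, Hinv j k * A j k) 0) ∧
    -- kernel on the torus consists exactly of the constants
    (∀ u : (Fin n → ℝ) → ℝ, ContDiff ℝ 2 u →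
      (∀ x j, u (x + Pi.single j (2 * Real.pi)) = u x) →
      ((∀ x, ∑ j, ∑ k, Hinv j k *
          iteratedFDeriv ℝ 2 u x ![Pi.single j 1, Pi.single k 1] = 0) ↔
        ∃ c : ℝ, ∀ x, u x = c)) := by
  refine ⟨fun A hA => ?_, fun u hu hper => ⟨fun hL => ?_, ?_⟩⟩
  · have h := hasDerivAt_im_log_det_one_add_smul ((-I / 2) • Hinv.map ofReal * A.map ofReal)
    rwa [im_trace_smul_map_ofReal_mul hA, show (-I / 2).im = -(1 / 2) by norm_num] at h
  · have hHinv_pos : Hinv.PosDef := inv_eq_right_inv hHinv.1 ▸ hpos.inv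
    exact exists_eq_const_of_hessianContract_eq_zero hHinv_pos hu Real.two_pi_pos
      (fun j x => hper x j) hL
  · rintro ⟨c, hc⟩ x
    simp [funext hc, iteratedFDeriv_const_of_ne]

/-- In the toric setting (constant positive definite Hessian `H = (ρ_{jk})` with inverse
`Hinv = (ρ^{jk})`, `η₀ = 1`, `U₀ = (−i/2)(ρ^{jk})`), the linearization at `(h,t)=(0,0)`
of the phase functional `F(h,t) = Im log Ω_t|_{L_h}` is
`δh ↦ −(1/2) Σ ρ^{jk} ∂²δh/∂θ_j∂θ_k`: its value on a Hessian matrix `A` of `δh` is the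
derivative at `s = 0` of `Im log det (I + s U₀ A)`.  Moreover this elliptic operator has,
on the torus (i.e. on smooth `2π`-periodic functions), kernel exactly the constants. -/
theorem toric_linearization_and_kernel
    (n : ℕ) (H Hinv : Matrix (Fin n) (Fin n) ℝ)
    (hpos : H.PosDef) (hsymm : H.IsSymm)
    (hHinv : H * Hinv = 1 ∧ Hinv * H = 1) :
    -- the linearization is δh ↦ −(1/2) Σ ρ^{jk} ∂²δh/∂θ_j∂θ_k
    (∀ A : Matrix (Fin n) (Fin n) ℝ, A.IsSymm →
      HasDerivAt (fun s : ℝ =>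
          (Complex.log (Matrix.det ((1 : Matrix (Fin n) (Fin n) ℂ) +
            (s : ℂ) • ((((-Complex.I) / 2) • (Hinv.map (fun a => (a : ℂ)))) *
              (A.map (fun a => (a : ℂ))))))).im)
        (-(1 / 2) * ∑ j, ∑ k, Hinv j k * A j k) 0) ∧
    -- kernel on the torus consists exactly of the constants
    (∀ u : (Fin n → ℝ) → ℝ, ContDiff ℝ 2 u →
      (∀ x j, u (x + Pi.single j (2 * Real.pi)) = u x) →
      ((∀ x, ∑ j, ∑ k, Hinv j k *
          iteratedFDeriv ℝ 2 u x ![Pi.single j 1, Pi.single k 1] = 0) ↔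
        ∃ c : ℝ, ∀ x, u x = c)) :=
  toric_linearization_and_kernel_general n H Hinv hpos hHinv
end

section
/- In ℂ^{n+1} with coordinates z₀,…,z_n, the map π_t(z) = (|z_k|² − min_{0≤i≤n} |z_i|²)_{k=0}^{n} sends the hypersurface X_{t,0} = {z₀⋯z_n = t} (t ≠ 0) into the boundary ∂Δ of the first quadrant Δ = ℝ_{≥0}^{n+1}, and each fibre of π_t over a point of ∂Δ with exactly one zero coordinate is a smooth n-torus. -/
/-!
Over a point `x` with `x_j = 0`, the fibre condition `π(z) = x` says exactly that
`|z_k|² = m + x_k` for one common `m` (necessarily `m = |z_j|² = min_i |z_i|²`). Taking norms in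
`∏ z_k = t` gives `∏ (m + x_k) = |t|²`, and the left side is strictly increasing in `m > 0`, so
`m`, and with it every radius `|z_k|`, is determined by `x` and `|t|`. The fibre is thus the
part of one polytorus cut out by `∏ z_k = t`; dividing by the radii turns it into
`{w ∈ (S¹)ⁿ⁺¹ | ∏ w_k = t / |t|}`, which forgetting the last coordinate identifies with `(S¹)ⁿ`.
-/

open Finset

section MomentMap

variable {ι : Type*} [Fintype ι] [Nonempty ι]

/-- The map `π_t` of the paper (it does not depend on `t`). -/
noncomputable def momentMap (z : ι → ℂ) (k : ι) : ℝ :=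
  ‖z k‖ ^ 2 - univ.inf' univ_nonempty (fun i => ‖z i‖ ^ 2)

theorem momentMap_nonneg (z : ι → ℂ) (k : ι) : 0 ≤ momentMap z k :=
  sub_nonneg.2 (inf'_le _ (mem_univ k))

theorem exists_momentMap_eq_zero (z : ι → ℂ) : ∃ k, momentMap z k = 0 := by
  obtain ⟨k, -, hk⟩ := exists_mem_eq_inf' univ_nonempty (fun i => ‖z i‖ ^ 2)
  exact ⟨k, sub_eq_zero.2 hk.symm⟩

theorem forall_momentMap_eq_iff_exists_sq_norm_eq {x : ι → ℝ} {j : ι} (hx : ∀ k, 0 ≤ x k)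
    (hj : x j = 0) (z : ι → ℂ) : (∀ k, momentMap z k = x k) ↔ ∃ m, ∀ k, ‖z k‖ ^ 2 = m + x k := by
  constructor
  · intro h
    exact ⟨_, fun k => by rw [← h k, momentMap]; ring⟩
  · rintro ⟨m, hm⟩ k
    have hinf : univ.inf' univ_nonempty (fun i => ‖z i‖ ^ 2) = m :=
      le_antisymm ((inf'_le _ (mem_univ j)).trans_eq (by rw [hm, hj, add_zero]))
        (le_inf' _ _ fun i _ => by rw [hm]; linarith [hx i])
    rw [momentMap, hinf, hm]
    ring

theorem strictMonoOn_prod_add {x : ι → ℝ} (hx : ∀ k, 0 ≤ x k) :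
    StrictMonoOn (fun m => ∏ k, (m + x k)) (Set.Ioi 0) := fun a ha _ _ hab =>
  prod_lt_prod_of_nonempty (fun k _ => by linarith [hx k, ha.out]) (fun _ _ => by linarith)
    univ_nonempty

theorem exists_pos_prod_add_eq {x : ι → ℝ} {j : ι} (hx : ∀ k, 0 ≤ x k) (hj : x j = 0)
    {c : ℝ} (hc : 0 < c) : ∃ m, 0 < m ∧ ∏ k, (m + x k) = c := by
  have h0 : ∏ k, (0 + x k) = 0 := prod_eq_zero (mem_univ j) (by rw [hj, add_zero])
  have hc1 : c ≤ ∏ k, ((c + 1) + x k) := calc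
    c ≤ (c + 1) ^ Fintype.card ι := (le_add_of_nonneg_right zero_le_one).trans
      (le_self_pow₀ (by linarith) Fintype.card_ne_zero)
    _ = ∏ _k : ι, (c + 1) := (prod_const _).symm
    _ ≤ ∏ k, ((c + 1) + x k) :=
      prod_le_prod (fun _ _ => by linarith) (fun k _ => by linarith [hx k])
  obtain ⟨m, hm, hmc⟩ := intermediate_value_Icc (by linarith : (0 : ℝ) ≤ c + 1)
    (by fun_prop : ContinuousOn (fun m => ∏ k, (m + x k)) _) ⟨by rw [h0]; exact hc.le, hc1⟩
  refine ⟨m, hm.1.lt_of_ne ?_, hmc⟩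
  rintro rfl
  exact hc.ne' (h0 ▸ hmc.symm)

theorem forall_momentMap_eq_iff_norm_eq {x : ι → ℝ} {j : ι} (hx : ∀ k, 0 ≤ x k)
    (hj : x j = 0) {m : ℝ} (hm : 0 < m) {t : ℂ} (ht : t ≠ 0) (hmt : ∏ k, (m + x k) = ‖t‖ ^ 2)
    {z : ι → ℂ} (hz : ∏ k, z k = t) :
    (∀ k, momentMap z k = x k) ↔ ∀ k, ‖z k‖ = √(m + x k) := by
  rw [forall_momentMap_eq_iff_exists_sq_norm_eq hx hj]
  constructor
  · rintro ⟨m', hm'⟩ k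
    have hm'pos : 0 < m' := by
      have hzj : z j ≠ 0 := prod_ne_zero_iff.1 (hz ▸ ht) j (mem_univ j)
      simpa [hm' j, hj] using pow_pos (norm_pos_iff.2 hzj) 2
    have hprod : ∏ k, (m' + x k) = ∏ k, (m + x k) := by
      rw [hmt, ← hz, norm_prod, ← prod_pow]
      exact prod_congr rfl fun k _ => (hm' k).symm
    rw [← (strictMonoOn_prod_add hx).injOn hm'pos hm hprod, ← hm' k,
      Real.sqrt_sq (norm_nonneg _)]
  · intro h
    exact ⟨m, fun k => by rw [h k, Real.sq_sqrt (by linarith [hx k])]⟩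

end MomentMap

theorem Circle.coe_prod {ι : Type*} (s : Finset ι) (w : ι → Circle) :
    ((∏ i ∈ s, w i : Circle) : ℂ) = ∏ i ∈ s, (w i : ℂ) :=
  map_prod Circle.coeHom w s

noncomputable def polytorusHomeomorph {ι : Type*} [Fintype ι] (r : ι → ℝ) (hr : ∀ k, 0 < r k)
    (u : Circle) {t : ℂ} (ht : ((∏ k, r k : ℝ) : ℂ) * u = t) :
    {z : ι → ℂ // ∏ k, z k = t ∧ ∀ k, ‖z k‖ = r k} ≃ₜ {w : ι → Circle // ∏ k, w k = u} :=
  have hr0 (k : ι) : (r k : ℂ) ≠ 0 := Complex.ofReal_ne_zero.2 (hr k).ne'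
  { toFun z := ⟨fun k => ⟨z.1 k / r k, mem_sphere_zero_iff_norm.2 <| by
        rw [norm_div, z.2.2 k, Complex.norm_real, Real.norm_of_nonneg (hr k).le,
          div_self (hr k).ne']⟩, Circle.ext <| (Circle.coe_prod _ _).trans <| by
        rw [prod_div_distrib, z.2.1, ← ht, Complex.ofReal_prod,
          mul_div_cancel_left₀ _ (prod_ne_zero_iff.2 fun k _ => hr0 k)]⟩
    invFun w := ⟨fun k => r k * w.1 k, by
        rw [prod_mul_distrib, ← Circle.coe_prod, w.2, ← ht, Complex.ofReal_prod],
      fun k => by rw [norm_mul, Circle.norm_coe, mul_one, Complex.norm_real,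
        Real.norm_of_nonneg (hr k).le]⟩
    left_inv z := Subtype.ext <| funext fun k => mul_div_cancel₀ _ (hr0 k)
    right_inv w := Subtype.ext <| funext fun k => Circle.ext <| mul_div_cancel_left₀ _ (hr0 k)
    continuous_toFun := by
      refine .subtype_mk (continuous_pi fun k => .subtype_mk ?_ _) _
      exact ((continuous_apply k).comp continuous_subtype_val).div_const _
    continuous_invFun := by
      refine .subtype_mk (continuous_pi fun k => continuous_const.mul ?_) _
      exact continuous_subtype_val.comp ((continuous_apply k).comp continuous_subtype_val) }

def finProdFiberHomeomorph {G : Type*} [CommGroup G] [TopologicalSpace G]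
    [IsTopologicalGroup G] (n : ℕ) (u : G) :
    {w : Fin (n + 1) → G // ∏ k, w k = u} ≃ₜ (Fin n → G) where
  toFun w := Fin.init w.1
  invFun φ := ⟨Fin.snoc φ ((∏ i, φ i)⁻¹ * u), by
    simp [Fin.prod_univ_castSucc, Fin.snoc_castSucc, Fin.snoc_last]⟩
  left_inv w := Subtype.ext <| by
    have hw := w.2
    rw [Fin.prod_univ_castSucc] at hw
    change Fin.snoc (Fin.init w.1) ((∏ i : Fin n, w.1 i.castSucc)⁻¹ * u) = w.1
    rw [inv_mul_eq_iff_eq_mul.2 hw.symm]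
    exact Fin.snoc_init_self _
  right_inv φ := Fin.init_snoc _ _
  continuous_toFun := continuous_subtype_val.finInit
  continuous_invFun := by
    apply Continuous.subtype_mk
    exact Continuous.finSnoc (A := fun _ => G) continuous_id (by fun_prop)

/-- The map `π_t(z)_k = |z_k|² − min_i |z_i|²` sends the hypersurface
`X_{t,0} = {z₀⋯z_n = t}` (`t ≠ 0`) into the boundary `∂Δ` of the first quadrant
`Δ = ℝ_{≥0}^{n+1}` (all coordinates nonnegative, at least one zero), and its fibre over
any point of `∂Δ` with exactly one vanishing coordinate is a smooth `n`-torus. -/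
theorem toric_local_model_fibration
    (n : ℕ) (t : ℂ) (ht : t ≠ 0) :
    (∀ z : Fin (n + 1) → ℂ, (∏ k, z k) = t →
      (∀ k, 0 ≤ ‖z k‖ ^ 2 -
          Finset.univ.inf' Finset.univ_nonempty (fun i => ‖z i‖ ^ 2)) ∧
      (∃ k, ‖z k‖ ^ 2 -
          Finset.univ.inf' Finset.univ_nonempty (fun i => ‖z i‖ ^ 2) = 0)) ∧
    (∀ x : Fin (n + 1) → ℝ, ∀ j : Fin (n + 1), x j = 0 → (∀ k, k ≠ j → 0 < x k) →
      Nonempty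
        (({z : Fin (n + 1) → ℂ // (∏ k, z k) = t ∧
            ∀ k, ‖z k‖ ^ 2 -
              Finset.univ.inf' Finset.univ_nonempty
                (fun i => ‖z i‖ ^ 2) = x k}) ≃ₜ (Fin n → Circle))) := by
  refine ⟨fun z _ => ⟨momentMap_nonneg z, exists_momentMap_eq_zero z⟩, fun x j hj hpos => ?_⟩
  have hx (k : Fin (n + 1)) : 0 ≤ x k := by
    rcases eq_or_ne k j with rfl | hk
    exacts [hj.ge, (hpos k hk).le]
  obtain ⟨m, hm, hmt⟩ := exists_pos_prod_add_eq hx hj (pow_pos (norm_pos_iff.2 ht) 2)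
  set r : Fin (n + 1) → ℝ := fun k => √(m + x k)
  have hr (k : Fin (n + 1)) : 0 < r k := Real.sqrt_pos.2 (by linarith [hx k])
  have hrt : ((∏ k, r k : ℝ) : ℂ) * Circle.exp (Complex.arg t) = t := by
    rw [← Real.sqrt_prod _ fun k _ => by linarith [hx k], hmt, Real.sqrt_sq (norm_nonneg t),
      Circle.coe_exp]
    exact Complex.norm_mul_exp_arg_mul_I t
  have hfibre : {z : Fin (n + 1) → ℂ | ∏ k, z k = t ∧ ∀ k, momentMap z k = x k} =
      {z | ∏ k, z k = t ∧ ∀ k, ‖z k‖ = r k} :=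
    Set.ext fun z => and_congr_right fun hz => forall_momentMap_eq_iff_norm_eq hx hj hm ht hmt hz
  exact ⟨(Homeomorph.setCongr hfibre).trans
    ((polytorusHomeomorph r hr _ hrt).trans (finProdFiberHomeomorph n _))⟩
end
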